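/- arXiv:1805.02087 — 3 statements merged into one kernel-verified Lean document; each statement's English description precedes it below -/
import Mathlib

section
/- In a directed graph G over X = O ∪ L ∪ S, if there does not exist an inducing path between observed vertices O_i and O_j, then O_i and O_j are d-separated given D-SEP(O_i, O_j) ∪ S, and likewise d-separated given D-SEP(O_j, O_i) ∪ S. -/
open List

variable {V : Type*}

/-- Ancestor relation: directed path or equality. -/
def Anc (E : V → V → Prop) : V → V → Prop := Relation.ReflTransGen E

/-- `x` is an ancestor of some member of the set `T`. -/
def AncSet (E : V → V → Prop) (T : Set V) (x : V) : Prop := ∃ y ∈ T, Anc E x y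

/-- Undirected adjacency underlying a directed graph. -/
def Adjacent (E : V → V → Prop) (x y : V) : Prop := E x y ∨ E y x

/-- An (undirected) path in the directed graph: consecutive vertices adjacent, no repeats. -/
def IsTrail (E : V → V → Prop) (l : List V) : Prop := l.Chain' (Adjacent E) ∧ l.Nodup

/-- `b` is a collider between `a` and `c`: both edges point into `b`. -/
def ColliderTriple (E : V → V → Prop) (a b c : V) : Prop := E a b ∧ E c b

/-- A path from `x` to `y` that is active (d-connecting) given the conditioning set `C`. -/
def ActivePath (E : V → V → Prop) (C : Set V) (l : List V) (x y : V) : Prop :=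
  IsTrail E l ∧ l.head? = some x ∧ l.getLast? = some y ∧
  (∀ a b c, [a, b, c] <:+: l → ColliderTriple E a b c → ∃ d ∈ C, Anc E b d) ∧
  (∀ a b c, [a, b, c] <:+: l → ¬ ColliderTriple E a b c → b ∉ C)

/-- d-connection given a conditioning set. -/
def DConn (E : V → V → Prop) (C : Set V) (x y : V) : Prop := ∃ l, ActivePath E C l x y

/-- d-separation given a conditioning set. -/
def DSep (E : V → V → Prop) (C : Set V) (x y : V) : Prop := ¬ DConn E C x y

/-- An inducing path between `x` and `y` relative to latent set `L` and selection set `S`. -/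
def InducingPath (E : V → V → Prop) (L S : Set V) (l : List V) (x y : V) : Prop :=
  IsTrail E l ∧ l.head? = some x ∧ l.getLast? = some y ∧
  (∀ a b c, [a, b, c] <:+: l → ColliderTriple E a b c → AncSet E ({x, y} ∪ S) b) ∧
  (∀ a b c, [a, b, c] <:+: l → ¬ ColliderTriple E a b c → b ∈ L)

def HasInducingPath (E : V → V → Prop) (L S : Set V) (x y : V) : Prop :=
  ∃ l, InducingPath E L S l x y

/-- The path ends with an arrowhead at its last vertex (is "into" its last vertex). -/
def IntoLast (E : V → V → Prop) (l : List V) : Prop := ∃ p a b, l = p ++ [a, b] ∧ E a b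

/-- The path is into its first vertex. -/
def IntoHead (E : V → V → Prop) (l : List V) : Prop := ∃ a b t, l = a :: b :: t ∧ E b a

/-- The path is out of its first vertex. -/
def OutHead (E : V → V → Prop) (l : List V) : Prop := ∃ a b t, l = a :: b :: t ∧ E a b

/-- The path is out of its last vertex. -/
def OutLast (E : V → V → Prop) (l : List V) : Prop := ∃ p a b, l = p ++ [a, b] ∧ E b a

/-- Membership in D-SEP(x,y). -/
def InDSEP (E : V → V → Prop) (O L S : Set V) (x y k : V) : Prop :=
  ∃ σ : List V, σ.head? = some x ∧ σ.getLast? = some k ∧ σ.Nodup ∧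
    (∀ v ∈ σ, v ∈ O ∧ AncSet E ({x, y} ∪ S) v) ∧
    σ.Chain' (HasInducingPath E L S) ∧
    (∀ a b c, [a, b, c] <:+: σ →
      (∃ l, InducingPath E L S l a b ∧ IntoLast E l) ∧
      (∃ l, InducingPath E L S l c b ∧ IntoLast E l))

/-- A mixed graph: symmetric adjacency together with arrowhead marks.
`arrow x y` means the edge between `x` and `y` has an arrowhead at `y`. -/
structure Mixed (V : Type*) where
  adj : V → V → Prop
  arrow : V → V → Prop

/-- v-structure `a *→ b ←* c` with `a, c` non-adjacent. -/
def VStruct (H : Mixed V) (a b c : V) : Prop :=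
  H.adj a b ∧ H.adj b c ∧ ¬ H.adj a c ∧ H.arrow a b ∧ H.arrow c b

def TriangleIn (H : Mixed V) (a b c : V) : Prop := H.adj a b ∧ H.adj b c ∧ H.adj a c

/-- Membership in PD-SEP(x) of a mixed graph. -/
def InPDSEP (H : Mixed V) (x k : V) : Prop :=
  ∃ pa : List V, pa.head? = some x ∧ pa.getLast? = some k ∧ pa.Nodup ∧ pa.Chain' H.adj ∧
    ∀ a b c, [a, b, c] <:+: pa → VStruct H a b c ∨ TriangleIn H a b c

/-- The MAAG of a directed graph with latent set `L` and selection set `S`: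
adjacency iff an inducing path exists, arrowhead at `y` iff `y ∉ Anc({x} ∪ S)`. -/
def MAAG (E : V → V → Prop) (L S : Set V) : Mixed V where
  adj := fun x y => x ≠ y ∧ HasInducingPath E L S x y
  arrow := fun x y => (x ≠ y ∧ HasInducingPath E L S x y) ∧ ¬ AncSet E (insert x S) y

/-- Undirected (tail-tail) edge of the MAAG. -/
def UndirMAAG (E : V → V → Prop) (L S : Set V) (a b : V) : Prop :=
  (a ≠ b ∧ HasInducingPath E L S a b) ∧ AncSet E (insert b S) a ∧ AncSet E (insert a S) b

/-- Every edge of the path incident to `v` is into `v`. -/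
def EdgesIntoAt (E : V → V → Prop) (l : List V) (v : V) : Prop :=
  ∀ a b, [a, b] <:+: l → (a = v → E b v) ∧ (b = v → E a v)

/-- Every edge of the path incident to `v` is out of `v`. -/
def EdgesOutAt (E : V → V → Prop) (l : List V) (v : V) : Prop :=
  ∀ a b, [a, b] <:+: l → (a = v → E v b) ∧ (b = v → E v a)

/-!
Suppose a path from `x` to `y` is active given `D-SEP(x, y) ∪ S`. Its colliders are ancestors
of `D-SEP(x, y) ∪ S`, hence of `{x, y} ∪ S`, and then so are all its vertices. If all its
non-colliders are latent, it is an inducing path. Otherwise its first observed non-collider `v`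
turns out to lie in `D-SEP(x, y)`, contradicting activeness. The part of the path from `x` to `v`
has only latent non-colliders, so its inner observed vertices are colliders; cutting there leaves
trails whose inner vertices are latent or selected. On such a trail from `a` to `b`, let `c` be
the first "bad" collider, one that is not an ancestor of `{a} ∪ S`, and follow a directed path
from `c` to the first vertex `z` that is selected or an observed ancestor of `{x, y} ∪ S`; it is
not selected since `c` is bad, and the vertices before it are latent. Along the trail to this
path and down to `z` runs an inducing path from `a` into `z`; back up and along the rest of the
trail runs a trail from `z` to `b` whose bad colliders all come after `c`. Iterating links `x` to
`v` through observed ancestors of `{x, y} ∪ S`, consecutive ones joined by inducing paths into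
each inner vertex from both sides, and shortcutting repetitions gives the sequence that `D-SEP`
asks for.
-/

namespace List

variable {α : Type*}

theorem exists_split_first (P : α → Prop) {l : List α} (h : ∃ v ∈ l, P v) :
    ∃ s z t, l = s ++ z :: t ∧ P z ∧ ∀ u ∈ s, ¬ P u := by
  induction l with
  | nil => simp at h
  | cons a l ih =>
    by_cases ha : P a
    · exact ⟨[], a, l, rfl, ha, by simp⟩
    · obtain ⟨s, z, t, rfl, hz, hs⟩ := ih (by simpa [ha] using h)
      exact ⟨a :: s, z, t, rfl, hz, by simpa [ha] using hs⟩

theorem exists_split_last (P : α → Prop) {l : List α} (h : ∃ v ∈ l, P v) :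
    ∃ s z t, l = s ++ z :: t ∧ P z ∧ ∀ u ∈ t, ¬ P u := by
  obtain ⟨s, z, t, hl, hz, hs⟩ := exists_split_first P (l := l.reverse) (by simpa using h)
  exact ⟨t.reverse, z, s.reverse, by simpa using congrArg reverse hl, hz, by simpa using hs⟩

theorem exists_split_of_not_nodup {l : List α} (h : ¬ l.Nodup) :
    ∃ s u t₁ t₂, l = s ++ u :: t₁ ++ u :: t₂ := by
  induction l with
  | nil => simp at h
  | cons a l ih =>
    by_cases ha : a ∈ l
    · obtain ⟨t₁, t₂, rfl⟩ := append_of_mem ha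
      exact ⟨[], a, t₁, t₂, rfl⟩
    · obtain ⟨s, u, t₁, t₂, rfl⟩ := ih (by simpa [ha] using h)
      exact ⟨a :: s, u, t₁, t₂, rfl⟩

theorem Nodup.append_cons_inj {s₁ s₂ t₁ t₂ : List α} {c : α} (hl : (s₁ ++ c :: t₁).Nodup)
    (he : s₁ ++ c :: t₁ = s₂ ++ c :: t₂) : s₁ = s₂ ∧ t₁ = t₂ := by
  classical
  have hnot {s t : List α} (h : (s ++ c :: t).Nodup) : c ∉ s := fun hc =>
    (nodup_append.mp h).2.2 c hc c mem_cons_self rfl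
  have hidx {s t : List α} (h : (s ++ c :: t).Nodup) : (s ++ c :: t).idxOf c = s.length := by
    simp [idxOf_append_of_notMem (hnot h)]
  have hlen : s₁.length = s₂.length := by
    rw [← hidx hl, ← hidx (he ▸ hl), he]
  obtain ⟨h₁, h₂⟩ := append_inj he hlen
  exact ⟨h₁, (cons_inj_right c).mp h₂⟩

theorem infix_triple_append_cons {u m p j : α} {B : List α} :
    ∀ {A : List α}, [u, m, p] <:+: A ++ j :: B → ([u, m, p] <:+: A ++ [j] ∧ m ∈ A) ∨ m ∈ j :: B
  | [], h => by
    rcases infix_cons_iff.mp h with ⟨t, ht⟩ | h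
    · simp at ht; simp [← ht.2]
    · exact Or.inr (mem_cons_of_mem _ (h.subset (by simp : m ∈ [u, m, p])))
  | a :: A, h => by
    rcases infix_cons_iff.mp h with ⟨t, ht⟩ | h
    · rcases A with _ | ⟨a₁, _ | ⟨a₂, A⟩⟩
      · simp at ht; simp [ht.2.1]
      · simp at ht; obtain ⟨rfl, rfl, rfl, -⟩ := ht; simp
      · simp at ht; obtain ⟨rfl, rfl, rfl, -⟩ := ht
        exact Or.inl ⟨⟨[], A ++ [j], by simp⟩, by simp⟩
    · exact (infix_triple_append_cons h).imp_left fun h' =>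
        ⟨h'.1.trans (suffix_cons _ _).isInfix, mem_cons_of_mem _ h'.2⟩

theorem mem_of_infix_triple_append_singleton {u m p j : α} {A : List α}
    (h : [u, m, p] <:+: A ++ [j]) : m ∈ A := by
  have h' : [p, m, u] <:+: j :: A.reverse := by simpa using reverse_infix.mpr h
  rcases infix_cons_iff.mp h' with ⟨t, ht⟩ | h'
  · simp only [cons_append, cons.injEq] at ht
    exact mem_reverse.mp (ht.2 ▸ mem_cons_self)
  · simpa using h'.subset (by simp : m ∈ [p, m, u])

theorem infix_triple_reverse {u m p : α} {l : List α} :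
    [u, m, p] <:+: l.reverse ↔ [p, m, u] <:+: l := by
  simpa using (reverse_infix (l₁ := [p, m, u]) (l₂ := l))

theorem Nodup.triple_center_ne_head {l : List α} {u m p a : α} (hl : l.Nodup)
    (ha : l.head? = some a) (h : [u, m, p] <:+: l) : m ≠ a := by
  obtain ⟨s, t, rfl⟩ := h
  rintro rfl
  rcases s with _ | ⟨b, s⟩ <;> simp_all

theorem Nodup.triple_center_ne_getLast {l : List α} {u m p b : α} (hl : l.Nodup)
    (hb : l.getLast? = some b) (h : [u, m, p] <:+: l) : m ≠ b :=
  (nodup_reverse.mpr hl).triple_center_ne_head (by simpa using hb)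
    (infix_triple_reverse.mpr h)

theorem exists_triple_of_mem {l : List α} {a b v : α} (ha : l.head? = some a)
    (hb : l.getLast? = some b) (hv : v ∈ l) (hva : v ≠ a) (hvb : v ≠ b) :
    ∃ u p, [u, v, p] <:+: l := by
  obtain ⟨s, t, rfl⟩ := append_of_mem hv
  rcases eq_nil_or_concat s with rfl | ⟨s, u, rfl⟩
  · simp_all
  rcases t with _ | ⟨p, t⟩
  · simp_all
  exact ⟨u, p, s, t, by simp⟩

theorem Nodup.length_lt_of_mem_suffix {P Q K : List α} {c : α}
    (hnd : (P ++ c :: Q).Nodup) (hK : K <:+ P ++ c :: Q) (hc : c ∈ K) :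
    Q.length < K.length := by
  obtain ⟨s, hs⟩ := hK
  obtain ⟨K₁, K₂, rfl⟩ := append_of_mem hc
  rw [← append_assoc] at hs
  obtain ⟨-, rfl⟩ := hnd.append_cons_inj hs.symm
  simp only [length_append, length_cons]
  omega

end List

section Graph

variable {E : V → V → Prop}

theorem AncSet.of_anc {T : Set V} {a b : V} (h : Anc E a b) (hb : AncSet E T b) :
    AncSet E T a :=
  let ⟨t, ht, hbt⟩ := hb; ⟨t, ht, h.trans hbt⟩

theorem AncSet.of_mem {T : Set V} {a : V} (h : a ∈ T) : AncSet E T a :=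
  ⟨a, h, Relation.ReflTransGen.refl⟩

theorem AncSet.mono {T T' : Set V} (h : T ⊆ T') {a : V} (ha : AncSet E T a) : AncSet E T' a :=
  let ⟨t, ht, hat⟩ := ha; ⟨t, h ht, hat⟩

theorem Adjacent.symm {a b : V} (h : Adjacent E a b) : Adjacent E b a := Or.symm h

theorem List.IsChain.anc_of_mem {D : List V} {u z : V} (hD : D.IsChain E) (hu : u ∈ D)
    (hz : D.getLast? = some z) : Anc E u z := by
  obtain ⟨s, t, rfl⟩ := List.append_of_mem hu
  have hut : (u :: t).IsChain E := hD.infix ⟨s, [], by simp⟩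
  have := List.relationReflTransGen_of_exists_isChain (u :: t) hut (List.cons_ne_nil _ _)
  rw [List.getLast?_append_of_ne_nil _ (List.cons_ne_nil _ _),
    List.getLast?_eq_some_getLast (List.cons_ne_nil _ _), Option.some_inj] at hz
  simpa [Anc, hz] using this

theorem IsTrail.reverse {l : List V} (h : IsTrail E l) : IsTrail E l.reverse :=
  ⟨List.isChain_reverse.mpr (h.1.imp fun _ _ => Adjacent.symm), List.nodup_reverse.mpr h.2⟩

theorem IsTrail.infix {l l' : List V} (h : IsTrail E l) (h' : l' <:+: l) : IsTrail E l' :=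
  ⟨h.1.infix h', h.2.sublist h'.sublist⟩

theorem colliderTriple_comm {a b c : V} : ColliderTriple E a b c ↔ ColliderTriple E c b a :=
  And.comm

theorem InducingPath.reverse {L S : Set V} {l : List V} {a b : V}
    (h : InducingPath E L S l a b) : InducingPath E L S l.reverse b a := by
  obtain ⟨ht, ha, hb, hcoll, hnc⟩ := h
  refine ⟨ht.reverse, by simpa using hb, by simpa using ha, fun u m p hi hc => ?_,
    fun u m p hi hc => hnc p m u (List.infix_triple_reverse.mp hi) (colliderTriple_comm.not.mp hc)⟩
  rw [Set.pair_comm]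
  exact hcoll p m u (List.infix_triple_reverse.mp hi) (colliderTriple_comm.mp hc)

theorem ActivePath.reverse {C : Set V} {l : List V} {a b : V} (h : ActivePath E C l a b) :
    ActivePath E C l.reverse b a := by
  obtain ⟨ht, ha, hb, hcoll, hnc⟩ := h
  exact ⟨ht.reverse, by simpa using hb, by simpa using ha,
    fun u m p hi hc => hcoll p m u (List.infix_triple_reverse.mp hi) (colliderTriple_comm.mp hc),
    fun u m p hi hc => hnc p m u (List.infix_triple_reverse.mp hi) (colliderTriple_comm.not.mp hc)⟩

@[simp]
theorem intoHead_cons_cons {a b : V} {t : List V} : IntoHead E (a :: b :: t) ↔ E b a := by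
  simp [IntoHead]

@[simp]
theorem intoLast_reverse {l : List V} : IntoLast E l.reverse ↔ IntoHead E l := by
  constructor
  · rintro ⟨p, a, b, hl, hE⟩
    exact ⟨b, a, p.reverse, by simpa using congrArg List.reverse hl, hE⟩
  · rintro ⟨a, b, t, rfl, hE⟩
    exact ⟨t.reverse, b, a, by simp, hE⟩

@[simp]
theorem intoHead_reverse {l : List V} : IntoHead E l.reverse ↔ IntoLast E l := by
  rw [← intoLast_reverse, List.reverse_reverse]

theorem intoHead_append {l₁ l₂ : List V} (h : 2 ≤ l₁.length) :
    IntoHead E (l₁ ++ l₂) ↔ IntoHead E l₁ := by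
  rcases l₁ with _ | ⟨a, _ | ⟨b, t⟩⟩ <;> simp_all

theorem intoLast_append {l₁ l₂ : List V} (h : 2 ≤ l₂.length) :
    IntoLast E (l₁ ++ l₂) ↔ IntoLast E l₂ := by
  rw [← intoHead_reverse, ← intoHead_reverse (l := l₂), List.reverse_append,
    intoHead_append (by simpa using h)]

theorem List.IsChain.intoLast {l : List V} (h : l.IsChain E) (hl : 2 ≤ l.length) :
    IntoLast E l := by
  obtain ⟨p, a, b, rfl⟩ : ∃ p a b, l = p ++ [a, b] := by
    rcases eq_nil_or_concat l with rfl | ⟨l, b, rfl⟩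
    · simp at hl
    rcases eq_nil_or_concat l with rfl | ⟨p, a, rfl⟩
    · simp at hl
    exact ⟨p, a, b, by simp⟩
  exact ⟨p, a, b, rfl, List.isChain_pair.mp (h.infix ⟨p, [], by simp⟩)⟩

end Graph

section Paths

variable {E : V → V → Prop}

theorem ancSet_of_edge_of_suffix {T : Set V} {l : List V} (hl : l.IsChain (Adjacent E))
    (hlast : ∀ z, l.getLast? = some z → AncSet E T z)
    (hcoll : ∀ a m c, [a, m, c] <:+: l → ColliderTriple E a m c → AncSet E T m) :
    ∀ (t : List V) (u v : V), u :: v :: t <:+ l → E u v → AncSet E T v := by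
  intro t
  induction t with
  | nil =>
    rintro u v ⟨s, rfl⟩ -
    exact hlast v (by simp)
  | cons w t ih =>
    rintro u v ⟨s, rfl⟩ huv
    by_cases hc : ColliderTriple E u v w
    · exact hcoll u v w ⟨s, t, by simp⟩ hc
    have hvw : E v w := (List.isChain_pair.mp (hl.infix ⟨s ++ [u], t, by simp⟩)).resolve_right
      fun hwv => hc ⟨huv, hwv⟩
    exact .of_anc (.single hvw) (ih v w ⟨s ++ [u], by simp⟩ hvw)

/-- Follow the path in the direction of an outgoing edge until the next collider or end point. -/
theorem ancSet_of_mem_path {T : Set V} {l : List V} {x y v : V} (hl : l.IsChain (Adjacent E))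
    (hx : l.head? = some x) (hy : l.getLast? = some y) (hxT : AncSet E T x)
    (hyT : AncSet E T y)
    (hcoll : ∀ a m c, [a, m, c] <:+: l → ColliderTriple E a m c → AncSet E T m)
    (hv : v ∈ l) : AncSet E T v := by
  obtain ⟨s, t, rfl⟩ := List.append_of_mem hv
  rcases t with _ | ⟨w, t⟩
  · simp_all
  rcases List.eq_nil_or_concat' s with rfl | ⟨s, u, rfl⟩
  · simp_all
  have htrip : [u, v, w] <:+: s ++ [u] ++ v :: w :: t := ⟨s, t, by simp⟩
  by_cases hvw : E v w
  · exact .of_anc (.single hvw) (ancSet_of_edge_of_suffix hl (fun z hz => by simp_all) hcoll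
      t v w ⟨s ++ [u], by simp⟩ hvw)
  by_cases hvu : E v u
  · refine .of_anc (.single hvu) (ancSet_of_edge_of_suffix (l := (s ++ [u] ++ v :: w :: t).reverse)
      (List.isChain_reverse.mpr (hl.imp fun _ _ => Adjacent.symm))
      (fun z hz => by rw [List.getLast?_reverse, hx] at hz; cases hz; exact hxT)
      (fun a m c h hc => hcoll c m a (List.infix_triple_reverse.mp h) (colliderTriple_comm.mp hc))
      s.reverse v u ⟨(w :: t).reverse, by simp⟩ hvu)
  have hu : E u v := (List.isChain_pair.mp (hl.infix ⟨s, w :: t, by simp⟩)).resolve_right hvu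
  have hw : E w v := (List.isChain_pair.mp (hl.infix ⟨s ++ [u], t, by simp⟩)).resolve_left hvw
  exact hcoll u v w htrip ⟨hu, hw⟩

theorem Anc.exists_path_to_first_mem {Z : Set V} {c t : V} (h : Anc E c t) (ht : t ∈ Z) :
    ∃ (D : List V) (z : V), D.IsChain E ∧ D.Nodup ∧ D.head? = some c ∧ D.getLast? = some z ∧
      z ∈ Z ∧ ∀ u ∈ D, u ≠ z → u ∉ Z := by
  induction h using Relation.ReflTransGen.head_induction_on with
  | refl => exact ⟨[t], t, by simp, by simp, rfl, rfl, ht, by simp⟩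
  | @head c c' hcc' _ ih =>
    obtain ⟨D, z, hD, hnd, hc', hz, hzS, hclean⟩ := ih
    by_cases hcS : c ∈ Z
    · exact ⟨[c], c, by simp, by simp, rfl, rfl, hcS, by simp⟩
    by_cases hcD : c ∈ D
    · obtain ⟨s, t, rfl⟩ := List.append_of_mem hcD
      refine ⟨c :: t, z, hD.infix ⟨s, [], by simp⟩, hnd.sublist (by simp), rfl, ?_, hzS,
        fun u hu => hclean u (by simp_all)⟩
      rwa [List.getLast?_append_of_ne_nil _ (List.cons_ne_nil _ _)] at hz
    obtain ⟨D, rfl⟩ := List.head?_eq_some_iff.mp hc'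
    refine ⟨c :: c' :: D, z, hD.cons (by simpa using hcc'), List.nodup_cons.mpr ⟨hcD, hnd⟩, rfl,
      by simpa using hz, hzS, ?_⟩
    rintro u (_ | ⟨_, hu⟩)
    · exact fun _ => hcS
    · exact hclean u hu

theorem IsTrail.append_cons {A B : List V} {w : V} (hA : IsTrail E (A ++ [w]))
    (hB : (w :: B).IsChain E) (hBnd : (w :: B).Nodup) (hdisj : ∀ v ∈ B, v ∉ A ++ [w]) :
    IsTrail E (A ++ w :: B) := by
  refine ⟨?_, ?_⟩
  · have := hA.1.append_overlap (l₃ := B) (hB.imp fun _ _ => Or.inl) (by simp)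
    rwa [List.append_assoc, List.singleton_append] at this
  · rw [show A ++ w :: B = (A ++ [w]) ++ B by simp, List.nodup_append]
    exact ⟨hA.2, hBnd.of_cons, fun a ha b hb hab => hdisj b hb (hab ▸ ha)⟩

end Paths

section Detour

variable {E : V → V → Prop}

/-- Leave the trail `R` at the last vertex `w` of the directed path `D` that lies on `R`, then
follow `D` down to `z`. -/
theorem exists_detour {R D : List V} {a c z : V} (hR : IsTrail E R) (hRa : R.head? = some a)
    (hcR : c ∈ R) (hD : D.IsChain E) (hDnd : D.Nodup) (hcD : c ∈ D)
    (hDz : D.getLast? = some z) (hzR : z ∉ R) (haD : a ∉ D) :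
    ∃ lft Pa, IsTrail E lft ∧ lft.head? = some a ∧ lft.getLast? = some z ∧ IntoLast E lft ∧
      (IntoHead E R → IntoHead E lft) ∧ Pa <+: lft ∧ Pa.length < R.length ∧
      ∀ u m p, [u, m, p] <:+: lft → ([u, m, p] <:+: R ∧ m ∈ Pa) ∨ (m ∈ D ∧ m ≠ z) := by
  obtain ⟨D₁, w, D₂, rfl, hwR, hD₂R⟩ := List.exists_split_last (· ∈ R) ⟨c, hcD, hcR⟩
  obtain ⟨Pa, Pb, rfl⟩ := List.append_of_mem hwR
  have hPa : Pa ≠ [] := by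
    rintro rfl
    exact haD (by simp_all)
  have hD₂ : D₂ ≠ [] := by
    rintro rfl
    exact hzR (by simp_all)
  have hwD₂ : w :: D₂ <:+ D₁ ++ w :: D₂ := List.suffix_append _ _
  have hPaw : Pa ++ [w] <+: Pa ++ w :: Pb := ⟨Pb, by simp⟩
  have hlast : (Pa ++ w :: D₂).getLast? = some z := by
    rwa [List.getLast?_append_of_ne_nil _ (List.cons_ne_nil _ _)] at hDz ⊢
  have hlft : IsTrail E (Pa ++ w :: D₂) :=
    (hR.infix hPaw.isInfix).append_cons (hD.infix hwD₂.isInfix) (hDnd.sublist hwD₂.sublist)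
      fun v hv hv' => hD₂R v hv (hPaw.subset hv')
  have hlen : 2 ≤ (Pa ++ [w]).length := by
    obtain ⟨_, _, rfl⟩ := List.exists_cons_of_ne_nil hPa; simp
  refine ⟨Pa ++ w :: D₂, Pa, hlft, ?_, hlast, ?_, fun h => ?_, List.prefix_append _ _,
    by simp, fun u m p hi => ?_⟩
  · rwa [List.head?_append_of_ne_nil _ hPa] at hRa ⊢
  · obtain ⟨_, _, rfl⟩ := List.exists_cons_of_ne_nil hD₂
    exact (intoLast_append (by simp)).mpr ((hD.infix hwD₂.isInfix).intoLast (by simp))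
  · rw [List.append_cons] at h ⊢
    exact (intoHead_append hlen).mpr ((intoHead_append hlen).mp h)
  · rcases List.infix_triple_append_cons hi with hA | hm
    · exact Or.inl ⟨hA.1.trans hPaw.isInfix, hA.2⟩
    · exact Or.inr ⟨hwD₂.subset hm, hlft.2.triple_center_ne_getLast hlast hi⟩

/-- Climb `D` back from `z` to its last vertex on `R`, then follow `R` to its end. -/
theorem exists_detour_reverse {R D : List V} {b c z : V} (hR : IsTrail E R)
    (hRb : R.getLast? = some b) (hcR : c ∈ R) (hD : D.IsChain E) (hDnd : D.Nodup) (hcD : c ∈ D)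
    (hDz : D.getLast? = some z) (hzR : z ∉ R) (hbD : b ∉ D) :
    ∃ rgt K, IsTrail E rgt ∧ rgt.head? = some z ∧ rgt.getLast? = some b ∧ IntoHead E rgt ∧
      (IntoLast E R → IntoLast E rgt) ∧ K <:+ rgt ∧ K.length < R.length ∧
      ∀ u m p, [u, m, p] <:+: rgt → ([u, m, p] <:+: R ∧ m ∈ K) ∨ (m ∈ D ∧ m ≠ z) := by
  obtain ⟨lft, Pa, hlft, hb, hz, hinto, hhead, hPa, hlen, htrip⟩ :=
    exists_detour hR.reverse (by simpa using hRb) (by simpa using hcR) hD hDnd hcD hDz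
      (by simpa using hzR) hbD
  refine ⟨lft.reverse, Pa.reverse, hlft.reverse, by simpa using hz, by simpa using hb,
    intoHead_reverse.mpr hinto, fun h => intoLast_reverse.mpr (hhead (intoHead_reverse.mpr h)),
    List.reverse_suffix.mpr hPa, by simpa using hlen, fun u m p hi => ?_⟩
  refine (htrip p m u (List.infix_triple_reverse.mp (by simpa using hi))).imp ?_ id
  rintro ⟨h, hm⟩
  exact ⟨List.infix_triple_reverse.mp h, List.mem_reverse.mpr hm⟩

end Detour

section Walks

variable {E : V → V → Prop} {L S : Set V}

def observedAnc (E : V → V → Prop) (O T : Set V) : Set V := {v | v ∈ O ∧ AncSet E T v}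

def InducingLink (E : V → V → Prop) (L S : Set V) (u w : V) (fu fw : Prop) : Prop :=
  ∃ l, InducingPath E L S l u w ∧ (fu → IntoHead E l) ∧ (fw → IntoLast E l)

theorem InducingLink.mono {u w : V} {fu fw fu' fw' : Prop} (h : InducingLink E L S u w fu fw)
    (hu : fu' → fu) (hw : fw' → fw) : InducingLink E L S u w fu' fw' :=
  let ⟨l, hl, hlu, hlw⟩ := h; ⟨l, hl, hlu ∘ hu, hlw ∘ hw⟩

/-- `fa` and `fb` ask for an arrowhead at the first and at the last vertex; every inner vertex
gets arrowheads from both of its links, as `D-SEP` requires. -/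
def LinkChain (E : V → V → Prop) (L S : Set V) (fa fb : Prop) : List V → Prop
  | u :: w :: rest =>
    InducingLink E L S u w fa (rest ≠ [] ∨ fb) ∧ LinkChain E L S True fb (w :: rest)
  | _ => True

theorem LinkChain.mono {fa fb fa' fb' : Prop} (hfa : fa' → fa) (hfb : fb' → fb) :
    ∀ {cs : List V}, LinkChain E L S fa fb cs → LinkChain E L S fa' fb' cs
  | _ :: w :: rest, ⟨hl, hc⟩ =>
    ⟨hl.mono hfa (Or.imp_right hfb), LinkChain.mono id hfb (cs := w :: rest) hc⟩
  | [], _ | [_], _ => trivial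

theorem LinkChain.tail {fa fb : Prop} {u : V} {l : List V} (h : LinkChain E L S fa fb (u :: l)) :
    LinkChain E L S True fb l := by
  rcases l with _ | ⟨w, l⟩
  · trivial
  · exact h.2

theorem LinkChain.of_append_right {fa fb : Prop} :
    ∀ {A B : List V}, LinkChain E L S fa fb (A ++ B) → A ≠ [] → LinkChain E L S True fb B
  | [_], _, h, _ => h.tail
  | _ :: a :: A, _, h, _ => LinkChain.of_append_right (A := a :: A) h.tail (List.cons_ne_nil _ _)

theorem LinkChain.of_append_cons_left {fa fb : Prop} {u : V} :
    ∀ {A B : List V}, LinkChain E L S fa fb (A ++ u :: B) → B ≠ [] →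
      LinkChain E L S fa True (A ++ [u])
  | [], _, _, _ => trivial
  | [_], _, h, hB => ⟨h.1.mono id fun _ => Or.inl hB, trivial⟩
  | _ :: a :: A, _, h, hB =>
    ⟨h.1.mono id fun _ => Or.inl (by simp), LinkChain.of_append_cons_left (A := a :: A) h.2 hB⟩

theorem LinkChain.append {fa fb : Prop} {z : V} {B : List V} :
    ∀ {A : List V}, LinkChain E L S fa True (A ++ [z]) → LinkChain E L S True fb (z :: B) →
      LinkChain E L S fa fb (A ++ z :: B)
  | [], _, h₂ => h₂.mono (fun _ => trivial) id
  | [_], h₁, h₂ => ⟨h₁.1.mono id fun _ => Or.inr trivial, h₂⟩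
  | _ :: a :: A, h₁, h₂ =>
    ⟨h₁.1.mono id fun _ => Or.inl (by simp), LinkChain.append (A := a :: A) h₁.2 h₂⟩

theorem LinkChain.cut {fa fb : Prop} {A B₁ B₂ : List V} {u : V}
    (h : LinkChain E L S fa fb (A ++ u :: B₁ ++ u :: B₂)) :
    LinkChain E L S fa fb (A ++ u :: B₂) :=
  (LinkChain.of_append_cons_left (B := B₁ ++ u :: B₂) (by simpa using h) (by simp)).append
    (h.of_append_right (by simp))

theorem LinkChain.exists_nodup {fa fb : Prop} {cs : List V} (h : LinkChain E L S fa fb cs) :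
    ∃ cs', cs'.Nodup ∧ LinkChain E L S fa fb cs' ∧ cs'.head? = cs.head? ∧
      cs'.getLast? = cs.getLast? ∧ ∀ w ∈ cs', w ∈ cs := by
  induction hn : cs.length using Nat.strong_induction_on generalizing cs with
  | _ n ih =>
    by_cases hnd : cs.Nodup
    · exact ⟨cs, hnd, h, rfl, rfl, fun _ => id⟩
    obtain ⟨A, u, B₁, B₂, rfl⟩ := List.exists_split_of_not_nodup hnd
    obtain ⟨cs', hnd', hcs', hhead, hlast, hmem⟩ :=
      ih _ (by simp [← hn]) h.cut rfl
    refine ⟨cs', hnd', hcs', by simp_all [List.head?_append], ?_, fun w hw => ?_⟩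
    · rw [hlast, List.getLast?_append_of_ne_nil _ (List.cons_ne_nil _ _),
        List.getLast?_append_of_ne_nil _ (List.cons_ne_nil _ _)]
    · have := hmem w hw; simp only [List.mem_append, List.mem_cons] at this ⊢; tauto

theorem LinkChain.isChain {fa fb : Prop} :
    ∀ {cs : List V}, LinkChain E L S fa fb cs → cs.IsChain (HasInducingPath E L S)
  | _ :: _ :: _, ⟨⟨l, hl, _⟩, hc⟩ => List.isChain_cons_cons.mpr ⟨⟨l, hl⟩, hc.isChain⟩
  | [], _ => List.isChain_nil
  | [_], _ => List.isChain_singleton _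

theorem LinkChain.into_of_infix {fa fb : Prop} {p q r : V} :
    ∀ {cs : List V}, LinkChain E L S fa fb cs → [p, q, r] <:+: cs →
      (∃ l, InducingPath E L S l p q ∧ IntoLast E l) ∧
      (∃ l, InducingPath E L S l r q ∧ IntoLast E l)
  | [], _, hi => by simpa using hi.length_le
  | u :: rest, h, hi => by
    rcases List.infix_cons_iff.mp hi with ⟨t, ht⟩ | hi
    · obtain ⟨rfl, rfl⟩ : p = u ∧ q :: r :: t = rest := by simpa using ht
      obtain ⟨l₁, hl₁, -, hl₁q⟩ := h.1
      obtain ⟨l₂, hl₂, hl₂q, -⟩ := h.2.1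
      exact ⟨⟨l₁, hl₁, hl₁q (Or.inl (by simp))⟩,
        ⟨l₂.reverse, hl₂.reverse, intoLast_reverse.mpr (hl₂q trivial)⟩⟩
    · exact h.tail.into_of_infix hi

def DSepWalk (E : V → V → Prop) (L S M : Set V) (fa fb : Prop) (a b : V) : Prop :=
  ∃ cs : List V, cs.head? = some a ∧ cs.getLast? = some b ∧ (∀ w ∈ cs, w ∈ M) ∧
    LinkChain E L S fa fb cs

variable {M : Set V} {fa fb : Prop}

theorem DSepWalk.mono {fa' fb' : Prop} {a b : V} (h : DSepWalk E L S M fa fb a b)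
    (hfa : fa' → fa) (hfb : fb' → fb) : DSepWalk E L S M fa' fb' a b :=
  let ⟨cs, ha, hb, hM, hc⟩ := h; ⟨cs, ha, hb, hM, hc.mono hfa hfb⟩

theorem DSepWalk.of_inducingLink {a b : V} (ha : a ∈ M) (hb : b ∈ M)
    (h : InducingLink E L S a b fa fb) :
    DSepWalk E L S M fa fb a b :=
  ⟨[a, b], rfl, rfl, by simp [ha, hb], h.mono id fun h => h.resolve_left (by simp), trivial⟩

theorem DSepWalk.cons {a z b : V} (ha : a ∈ M) (h : InducingLink E L S a z fa True)
    (hw : DSepWalk E L S M True fb z b) : DSepWalk E L S M fa fb a b := by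
  obtain ⟨cs, hz, hb, hM, hc⟩ := hw
  obtain ⟨rest, rfl⟩ := List.head?_eq_some_iff.mp hz
  refine ⟨a :: z :: rest, rfl, ?_, by simp_all, h.mono id fun _ => trivial, hc⟩
  simpa using hb

theorem DSepWalk.trans {a m b : V} (h₁ : DSepWalk E L S M fa True a m)
    (h₂ : DSepWalk E L S M True fb m b) : DSepWalk E L S M fa fb a b := by
  obtain ⟨cs₁, ha, hm, hM₁, hc₁⟩ := h₁
  obtain ⟨cs₂, hm', hb, hM₂, hc₂⟩ := h₂
  obtain ⟨A, rfl⟩ := List.getLast?_eq_some_iff.mp hm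
  obtain ⟨B, rfl⟩ := List.head?_eq_some_iff.mp hm'
  refine ⟨A ++ m :: B, ?_, ?_, fun w hw => ?_, hc₁.append hc₂⟩
  · rcases A with _ | ⟨a', A⟩ <;> simp_all
  · rwa [List.getLast?_append_of_ne_nil _ (List.cons_ne_nil _ _)]
  · rcases List.mem_append.mp hw with hw | hw
    · exact hM₁ w (by simp [hw])
    · exact hM₂ w hw

theorem DSepWalk.inDSEP {O : Set V} {x y k : V}
    (h : DSepWalk E L S (observedAnc E O ({x, y} ∪ S)) fa fb x k) :
    InDSEP E O L S x y k := by
  obtain ⟨cs, hx, hk, hM, hc⟩ := h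
  obtain ⟨σ, hnd, hσ, hhead, hlast, hmem⟩ := hc.exists_nodup
  exact ⟨σ, hhead ▸ hx, hlast ▸ hk, hnd, fun w hw => hM w (hmem w hw), hσ.isChain,
    fun _ _ _ hi => hσ.into_of_infix hi⟩

end Walks

section Segments

variable {E : V → V → Prop} {O L S X : Set V}

structure AdmissibleTrail (E : V → V → Prop) (O L T : Set V) (r : List V) (a b : V) : Prop where
  isTrail : IsTrail E r
  head : r.head? = some a
  getLast : r.getLast? = some b
  head_mem : a ∈ observedAnc E O T
  getLast_mem : b ∈ observedAnc E O T
  collider : ∀ u m p, [u, m, p] <:+: r → ColliderTriple E u m p → AncSet E T m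
  noncollider : ∀ u m p, [u, m, p] <:+: r → ¬ ColliderTriple E u m p → m ∈ L

theorem AdmissibleTrail.infix {T : Set V} {r r' : List V} {a b a' b' : V}
    (hr : AdmissibleTrail E O L T r a b) (h : r' <:+: r) (ha : r'.head? = some a')
    (hb : r'.getLast? = some b') (ha' : a' ∈ observedAnc E O T) (hb' : b' ∈ observedAnc E O T) :
    AdmissibleTrail E O L T r' a' b' :=
  ⟨hr.isTrail.infix h, ha, hb, ha', hb', fun u m p hi => hr.collider u m p (hi.trans h),
    fun u m p hi => hr.noncollider u m p (hi.trans h)⟩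

theorem exists_latent_path (hX : X ⊆ O) (hcover : ∀ v : V, v ∈ O ∨ v ∈ L ∨ v ∈ S) {c : V}
    (hc : AncSet E (X ∪ S) c) :
    ∃ (D : List V) (z : V), D.IsChain E ∧ D.Nodup ∧ D.head? = some c ∧ D.getLast? = some z ∧
      (z ∈ S ∨ z ∈ observedAnc E O (X ∪ S)) ∧ ∀ u ∈ D, u ≠ z → u ∈ L := by
  obtain ⟨t, ht, hct⟩ := hc
  have htS : t ∈ S ∪ observedAnc E O (X ∪ S) := by
    rcases ht with ht | ht
    · exact Or.inr ⟨hX ht, .of_mem (Or.inl ht)⟩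
    · exact Or.inl ht
  obtain ⟨D, z, hD, hnd, hc, hz, hzS, hclean⟩ := Anc.exists_path_to_first_mem hct htS
  refine ⟨D, z, hD, hnd, hc, hz, hzS, fun u hu huz => ?_⟩
  have huz' := hD.anc_of_mem hu hz
  have hu := hclean u hu huz
  rcases hcover u with huO | huL | huS
  · refine absurd (Or.inr ⟨huO, ?_⟩) hu
    rcases hzS with hzS | hzS
    · exact .of_anc huz' (.of_mem (Or.inr hzS))
    · exact .of_anc huz' hzS.2
  · exact huL
  · exact absurd (Or.inl huS) hu

theorem AdmissibleTrail.exists_latent_path_of_collider (hX : X ⊆ O) (hOL : Disjoint O L)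
    (hcover : ∀ v : V, v ∈ O ∨ v ∈ L ∨ v ∈ S) {r : List V} {a b u c p : V}
    (hr : AdmissibleTrail E O L (X ∪ S) r a b) (hint : ∀ u m p, [u, m, p] <:+: r → m ∉ O)
    (hi : [u, c, p] <:+: r) (hc : ColliderTriple E u c p) (hbad : ¬ AncSet E ({a} ∪ S) c) :
    ∃ (D : List V) (z : V), D.IsChain E ∧ D.Nodup ∧ c ∈ D ∧ D.getLast? = some z ∧
      (∀ v ∈ D, v ≠ z → v ∈ L) ∧ z ∈ observedAnc E O (X ∪ S) ∧ z ≠ a ∧ (z ∈ r → z = b) ∧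
      ∀ v ∈ O, v ∈ D → v = z := by
  obtain ⟨D, z, hD, hDnd, hDc, hDz, hzM, hDL⟩ :=
    exists_latent_path hX hcover (hr.collider u c p hi hc)
  have hcD : c ∈ D := List.mem_of_mem_head? hDc
  have hcz : Anc E c z := hD.anc_of_mem hcD hDz
  have hza : z ≠ a := fun h => hbad ⟨a, Or.inl rfl, h ▸ hcz⟩
  have hz : z ∈ observedAnc E O (X ∪ S) := hzM.resolve_left fun hzS => hbad ⟨z, Or.inr hzS, hcz⟩
  refine ⟨D, z, hD, hDnd, hcD, hDz, hDL, hz, hza, fun hzr => ?_, fun v hvO hvD => ?_⟩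
  · by_contra hzb
    obtain ⟨u, p, hi⟩ := List.exists_triple_of_mem hr.head hr.getLast hzr hza hzb
    exact hint u z p hi hz.1
  · by_contra hvz
    exact Set.disjoint_left.mp hOL hvO (hDL v hvD hvz)

theorem inducingLink_of_detour {R D : List V} {a c z : V} (hR : IsTrail E R)
    (hRa : R.head? = some a) (hcR : c ∈ R)
    (hRcoll : ∀ u m p, [u, m, p] <:+: R → ColliderTriple E u m p → AncSet E ({a} ∪ S) m)
    (hRnc : ∀ u m p, [u, m, p] <:+: R → ¬ ColliderTriple E u m p → m ∈ L)
    (hD : D.IsChain E) (hDnd : D.Nodup) (hcD : c ∈ D) (hDz : D.getLast? = some z)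
    (hDL : ∀ u ∈ D, u ≠ z → u ∈ L) (hzR : z ∉ R) (haD : a ∉ D) :
    InducingLink E L S a z (IntoHead E R) True := by
  obtain ⟨lft, _, hlft, ha, hz, hinto, hhead, _, _, htrip⟩ :=
    exists_detour hR hRa hcR hD hDnd hcD hDz hzR haD
  refine ⟨lft, ⟨hlft, ha, hz, fun u m p hi hc => ?_, fun u m p hi hc => ?_⟩, hhead,
    fun _ => hinto⟩
  · rcases htrip u m p hi with ⟨hi, -⟩ | ⟨hm, -⟩
    · exact (hRcoll u m p hi hc).mono (Set.union_subset_union_left _ (by simp))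
    · exact ⟨z, by simp, hD.anc_of_mem hm hDz⟩
  · rcases htrip u m p hi with ⟨hi, -⟩ | ⟨hm, hmz⟩
    · exact hRnc u m p hi hc
    · exact hDL m hm hmz

theorem AdmissibleTrail.inducingLink_of_first_bad {T : Set V} {P Q D : List V} {a b c z : V}
    (hr : AdmissibleTrail E O L T (P ++ c :: Q) a b) (hP : P ≠ [])
    (hPgood : ∀ m ∈ P, ∀ u p, [u, m, p] <:+: P ++ c :: Q → ColliderTriple E u m p →
      AncSet E ({a} ∪ S) m)
    (hD : D.IsChain E) (hDnd : D.Nodup) (hcD : c ∈ D) (hDz : D.getLast? = some z)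
    (hDL : ∀ v ∈ D, v ≠ z → v ∈ L) (hQ : Q ≠ []) (hzb : z ∈ P ++ c :: Q → z = b)
    (haD : a ∉ D) :
    InducingLink E L S a z (IntoHead E (P ++ c :: Q)) True := by
  have hPc : P ++ [c] <:+: P ++ c :: Q := ⟨[], Q, by simp⟩
  have hzP : z ∉ P ++ [c] := by
    intro h
    obtain rfl := hzb (hPc.subset h)
    obtain ⟨q, Q, rfl⟩ := List.exists_cons_of_ne_nil hQ
    have hb := hr.getLast
    rw [List.getLast?_append_of_ne_nil _ (List.cons_ne_nil _ _), List.getLast?_cons_cons] at hb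
    exact List.disjoint_of_nodup_append (by simpa using hr.isTrail.2) h (List.mem_of_getLast? hb)
  refine (inducingLink_of_detour (hr.isTrail.infix hPc) ?_ (by simp) (fun u m p hi hc => ?_)
    (fun u m p hi => hr.noncollider u m p (hi.trans hPc)) hD hDnd hcD hDz hDL hzP haD).mono
    (fun h => ?_) id
  · have := hr.head
    rwa [List.head?_append_of_ne_nil _ hP] at this ⊢
  · exact hPgood m (List.mem_of_infix_triple_append_singleton hi) u p (hi.trans hPc) hc
  · rw [List.append_cons] at h
    exact (intoHead_append (by simp [Nat.one_le_iff_ne_zero, hP])).mp h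

theorem AdmissibleTrail.exists_admissible_of_latent_path (hOL : Disjoint O L)
    {P Q D : List V} {a b c z : V} (hr : AdmissibleTrail E O L (X ∪ S) (P ++ c :: Q) a b)
    (hint : ∀ u m p, [u, m, p] <:+: P ++ c :: Q → m ∉ O) (hQ : Q ≠ [])
    (hD : D.IsChain E) (hDnd : D.Nodup) (hcD : c ∈ D) (hDz : D.getLast? = some z)
    (hDL : ∀ u ∈ D, u ≠ z → u ∈ L) (hz : z ∈ observedAnc E O (X ∪ S))
    (hzr : z ∉ P ++ c :: Q) (hbD : b ∉ D) :
    ∃ rgt K, AdmissibleTrail E O L (X ∪ S) rgt z b ∧ (∀ u m p, [u, m, p] <:+: rgt → m ∉ O) ∧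
      IntoHead E rgt ∧ (IntoLast E (P ++ c :: Q) → IntoLast E rgt) ∧ K <:+ rgt ∧
      K.length ≤ Q.length ∧
      ∀ u m p, [u, m, p] <:+: rgt → ColliderTriple E u m p → ¬ AncSet E ({z} ∪ S) m → m ∈ K := by
  have hcQ : c :: Q <:+: P ++ c :: Q := (List.suffix_append _ _).isInfix
  have hcQb : (c :: Q).getLast? = some b := by
    have := hr.getLast
    rwa [List.getLast?_append_of_ne_nil _ (List.cons_ne_nil _ _)] at this
  obtain ⟨rgt, K, hrgt, hz', hb', hhead, hlast, hK, hKlen, htrip⟩ :=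
    exists_detour_reverse (hr.isTrail.infix hcQ) hcQb (by simp) hD hDnd hcD hDz
      (fun h => hzr (hcQ.subset h)) hbD
  have hDanc : ∀ m ∈ D, AncSet E ({z} ∪ S) m := fun m hm => ⟨z, by simp, hD.anc_of_mem hm hDz⟩
  refine ⟨rgt, K, ⟨hrgt, hz', hb', hz, hr.getLast_mem, fun u m p hi hc => ?_,
    fun u m p hi hc => ?_⟩, fun u m p hi => ?_, hhead,
    fun h => hlast ((intoLast_append (by simp [Nat.one_le_iff_ne_zero, hQ])).mp h), hK,
    by simpa [Nat.lt_succ_iff] using hKlen, fun u m p hi hc hm => ?_⟩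
  · rcases htrip u m p hi with ⟨hi, -⟩ | ⟨hm, -⟩
    · exact hr.collider u m p (hi.trans hcQ) hc
    · exact .of_anc (hD.anc_of_mem hm hDz) hz.2
  · rcases htrip u m p hi with ⟨hi, -⟩ | ⟨hm, hmz⟩
    · exact hr.noncollider u m p (hi.trans hcQ) hc
    · exact hDL m hm hmz
  · rcases htrip u m p hi with ⟨hi, -⟩ | ⟨hm, hmz⟩
    · exact hint u m p (hi.trans hcQ)
    · exact Set.disjoint_right.mp hOL (hDL m hm hmz)
  · rcases htrip u m p hi with ⟨-, hmK⟩ | ⟨hmD, -⟩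
    · exact hmK
    · exact absurd (hDanc m hmD) hm

/-- Strong induction on the length of `K`, a final part of the trail containing all bad
colliders: the trail from `z` has its bad colliders in a final part shorter than the one after
`c`. -/
theorem AdmissibleTrail.dsepWalk_of_inner_not_mem (hX : X ⊆ O) (hOL : Disjoint O L)
    (hcover : ∀ v : V, v ∈ O ∨ v ∈ L ∨ v ∈ S) {r K : List V} {a b : V}
    (hr : AdmissibleTrail E O L (X ∪ S) r a b) (hint : ∀ u m p, [u, m, p] <:+: r → m ∉ O)
    (hKr : K <:+ r)
    (hbadK : ∀ u m p, [u, m, p] <:+: r → ColliderTriple E u m p → ¬ AncSet E ({a} ∪ S) m →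
      m ∈ K) :
    DSepWalk E L S (observedAnc E O (X ∪ S)) (IntoHead E r) (IntoLast E r) a b := by
  induction hn : K.length using Nat.strong_induction_on generalizing r K a with
  | _ n ih =>
  by_cases hgood : ∀ u m p, [u, m, p] <:+: r → ColliderTriple E u m p → AncSet E ({a} ∪ S) m
  · exact .of_inducingLink hr.head_mem hr.getLast_mem ⟨r, ⟨hr.isTrail, hr.head, hr.getLast,
      fun u m p hi hc => (hgood u m p hi hc).mono (Set.union_subset_union_left _ (by simp)),
      hr.noncollider⟩, id, id⟩
  obtain ⟨u₀, c₀, p₀, hi₀, hc₀, hbad₀⟩ : ∃ u m p, [u, m, p] <:+: r ∧ ColliderTriple E u m p ∧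
      ¬ AncSet E ({a} ∪ S) m := by simpa only [not_forall, exists_prop] using hgood
  obtain ⟨P, c, Q, rfl, ⟨u₁, p₁, hi, hc, hbad⟩, hPgood⟩ := List.exists_split_first
    (fun m => ∃ u p, [u, m, p] <:+: r ∧ ColliderTriple E u m p ∧ ¬ AncSet E ({a} ∪ S) m)
    ⟨c₀, hi₀.subset (by simp), u₀, p₀, hi₀, hc₀, hbad₀⟩
  have hnd := hr.isTrail.2
  have hP : P ≠ [] := fun hP => hnd.triple_center_ne_head (by simp [hP]) hi rfl
  have hQ : Q ≠ [] := fun hQ => hnd.triple_center_ne_getLast (by simp [hQ]) hi rfl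
  obtain ⟨D, z, hD, hDnd, hcD, hDz, hDL, hz, hza, hzb, hDO⟩ :=
    hr.exists_latent_path_of_collider hX hOL hcover hint hi hc hbad
  have hlft := hr.inducingLink_of_first_bad hP
    (fun m hm u p hi hc => by_contra fun h => hPgood m hm ⟨u, p, hi, hc, h⟩) hD hDnd hcD hDz hDL
    hQ hzb fun h => hza (hDO a hr.head_mem.1 h).symm
  by_cases hzr : z ∈ P ++ c :: Q
  · obtain rfl := hzb hzr
    exact .of_inducingLink hr.head_mem hr.getLast_mem (hlft.mono id fun _ => trivial)
  obtain ⟨rgt, K', hrgt, hint', hhead, hlast, hK', hK'len, hbadK'⟩ :=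
    hr.exists_admissible_of_latent_path hOL hint hQ hD hDnd hcD hDz hDL hz hzr
      fun h => hzr (hDO b hr.getLast_mem.1 h ▸ List.mem_of_getLast? hr.getLast)
  have hQK : Q.length < K.length := hnd.length_lt_of_mem_suffix hKr (hbadK u₁ c p₁ hi hc hbad)
  exact .cons hr.head_mem hlft ((ih K'.length (by omega) hrgt hint' hK' hbadK' rfl).mono
    (fun _ => hhead) hlast)

theorem AdmissibleTrail.dsepWalk (hX : X ⊆ O) (hOL : Disjoint O L)
    (hcover : ∀ v : V, v ∈ O ∨ v ∈ L ∨ v ∈ S) {r : List V} {a b : V}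
    (hr : AdmissibleTrail E O L (X ∪ S) r a b) :
    DSepWalk E L S (observedAnc E O (X ∪ S)) (IntoHead E r) (IntoLast E r) a b := by
  induction hn : r.length using Nat.strong_induction_on generalizing r a b with
  | _ n ih =>
  by_cases hO : ∃ u m p, [u, m, p] <:+: r ∧ m ∈ O
  swap
  · exact hr.dsepWalk_of_inner_not_mem hX hOL hcover (fun u m p hi hm => hO ⟨u, m, p, hi, hm⟩)
      (List.suffix_refl r) fun _ _ _ hi _ _ => hi.subset (by simp)
  obtain ⟨u, m, p, ⟨s, t, rfl⟩, hmO⟩ := hO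
  have hc : ColliderTriple E u m p := by_contra fun h =>
    Set.disjoint_left.mp hOL hmO (hr.noncollider u m p ⟨s, t, rfl⟩ h)
  have hm : m ∈ observedAnc E O (X ∪ S) := ⟨hmO, hr.collider u m p ⟨s, t, rfl⟩ hc⟩
  have hsplit₁ : s ++ [u, m, p] ++ t = (s ++ [u, m]) ++ p :: t := by simp
  have hsplit₂ : s ++ [u, m, p] ++ t = (s ++ [u]) ++ m :: p :: t := by simp
  have h₁ := ih _ (by simp [← hn]) (hr.infix (r' := s ++ [u, m]) ⟨[], p :: t, by simp⟩
    (by rw [← List.head?_append_of_ne_nil _ (by simp), ← hsplit₁]; exact hr.head) (by simp)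
    hr.head_mem hm) rfl
  have h₂ := ih _ (by simp [← hn]; omega) (hr.infix (r' := m :: p :: t) ⟨s ++ [u], [], by simp⟩ rfl
    (by rw [← List.getLast?_append_of_ne_nil (s ++ [u]) (by simp), ← hsplit₂]; exact hr.getLast)
    hm hr.getLast_mem) rfl
  refine (h₁.mono (fun h => ?_) fun _ => ⟨s, u, m, by simp, hc.1⟩).trans
    (h₂.mono (fun _ => intoHead_cons_cons.mpr hc.2) fun h => ?_)
  · rw [hsplit₁] at h
    exact (intoHead_append (by simp)).mp h
  · rw [hsplit₂] at h
    exact (intoLast_append (by simp)).mp h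

end Segments

section Main

variable {E : V → V → Prop} {O L S : Set V}

theorem dsep_of_not_hasInducingPath (hOL : Disjoint O L)
    (hcover : ∀ v : V, v ∈ O ∨ v ∈ L ∨ v ∈ S) {x y : V} (hx : x ∈ O) (hy : y ∈ O)
    (hip : ¬ HasInducingPath E L S x y) :
    DSep E ({k | InDSEP E O L S x y k} ∪ S) x y := by
  rintro ⟨l, hl, hlx, hly, hcoll, hnc⟩
  have hcollT : ∀ u m p, [u, m, p] <:+: l → ColliderTriple E u m p →
      AncSet E ({x, y} ∪ S) m := fun u m p hi hc => by
    obtain ⟨d, hd, hmd⟩ := hcoll u m p hi hc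
    refine .of_anc hmd ?_
    rcases hd with ⟨σ, -, hσd, -, hσ, -⟩ | hdS
    · exact (hσ d (List.mem_of_getLast? hσd)).2
    · exact .of_mem (Or.inr hdS)
  have hxT : AncSet E ({x, y} ∪ S) x := .of_mem (by simp)
  have hyT : AncSet E ({x, y} ∪ S) y := .of_mem (by simp)
  have hncS : ∀ u m p, [u, m, p] <:+: l → ¬ ColliderTriple E u m p → m ∉ S :=
    fun u m p hi hc hmS => hnc u m p hi hc (Or.inr hmS)
  by_cases hv : ∃ v ∈ l, ∃ u p, [u, v, p] <:+: l ∧ ¬ ColliderTriple E u v p ∧ v ∈ O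
  swap
  · refine hip ⟨l, hl, hlx, hly, hcollT, fun u m p hi hc => ?_⟩
    refine ((hcover m).resolve_left fun hmO => hv ?_).resolve_right (hncS u m p hi hc)
    exact ⟨m, hi.subset (by simp), u, p, hi, hc, hmO⟩
  obtain ⟨α, v, β, rfl, ⟨u, p, hi, hc, hvO⟩, hα⟩ := List.exists_split_first _ hv
  have hαv : α ++ [v] <:+: α ++ v :: β := ⟨[], β, by simp⟩
  have hα₀ : α ≠ [] := fun h => hl.2.triple_center_ne_head (by simp [h]) hi rfl
  have hq : AdmissibleTrail E O L ({x, y} ∪ S) (α ++ [v]) x v := by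
    refine ⟨hl.infix hαv, ?_, by simp, ⟨hx, hxT⟩,
      ⟨hvO, ancSet_of_mem_path hl.1 hlx hly hxT hyT hcollT (by simp)⟩,
      fun u m p hi => hcollT u m p (hi.trans hαv), fun u' m p' hi' hc' => ?_⟩
    · rwa [List.head?_append_of_ne_nil _ hα₀] at hlx ⊢
    · have hm := List.mem_of_infix_triple_append_singleton hi'
      exact ((hcover m).resolve_left fun hmO => hα m hm ⟨u', p', hi'.trans hαv, hc', hmO⟩)
        |>.resolve_right (hncS u' m p' (hi'.trans hαv) hc')
  exact hnc u v p hi hc (Or.inl (hq.dsepWalk (Set.pair_subset hx hy) hOL hcover).inDSEP)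

end Main

theorem stmt2_general (E : V → V → Prop) (O L S : Set V)
    (hOL : Disjoint O L)
    (hcover : ∀ v : V, v ∈ O ∨ v ∈ L ∨ v ∈ S)
    (x y : V) (hx : x ∈ O) (hy : y ∈ O)
    (hip : ¬ HasInducingPath E L S x y) :
    DSep E ({k | InDSEP E O L S x y k} ∪ S) x y ∧
    DSep E ({k | InDSEP E O L S y x k} ∪ S) x y := by
  refine ⟨dsep_of_not_hasInducingPath hOL hcover hx hy hip, fun ⟨l, hl⟩ => ?_⟩
  have hip' : ¬ HasInducingPath E L S y x := fun ⟨l', hl'⟩ => hip ⟨l'.reverse, hl'.reverse⟩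
  exact dsep_of_not_hasInducingPath hOL hcover hy hx hip' ⟨l.reverse, hl.reverse⟩

/-- if no inducing path exists between `x` and `y`, then `x` and `y`
are d-separated given `D-SEP(x,y) ∪ S`, and likewise given `D-SEP(y,x) ∪ S`. -/
theorem stmt2 (E : V → V → Prop) (O L S : Set V)
    (hOL : Disjoint O L) (hOS : Disjoint O S) (hLS : Disjoint L S)
    (hcover : ∀ v : V, v ∈ O ∨ v ∈ L ∨ v ∈ S)
    (x y : V) (hx : x ∈ O) (hy : y ∈ O) (hxy : x ≠ y)
    (hip : ¬ HasInducingPath E L S x y) :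
    DSep E ({k | InDSEP E O L S x y k} ∪ S) x y ∧
    DSep E ({k | InDSEP E O L S y x k} ∪ S) x y :=
  stmt2_general E O L S hOL hcover x y hx hy hip
end

section
/- (Contrapositive of ancestral closure of separation) Assume O_i and O_k are d-separated given W ∪ S with O_j ∈ W and W ⊆ O \ {O_i, O_k}, but O_i and O_k are d-connected given {O_l} ∪ W ∪ S. Then O_l is not an ancestor of O_j ∪ S. -/
open List

variable {V : Type*}

/-- if `i` and `k` are d-separated given `W ∪ S` with `j ∈ W`, but d-connected
given `{l} ∪ W ∪ S`, then `l` is not an ancestor of `j ∪ S`. -/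
theorem stmt9 (E : V → V → Prop) (O L S : Set V)
    (hOL : Disjoint O L) (hOS : Disjoint O S) (hLS : Disjoint L S)
    (hcover : ∀ v : V, v ∈ O ∨ v ∈ L ∨ v ∈ S)
    (i j k l : V) (W : Set V) (hW : W ⊆ O \ {i, k}) (hj : j ∈ W)
    (hsep : DSep E (W ∪ S) i k)
    (hconn : DConn E ({l} ∪ W ∪ S) i k) :
    ¬ AncSet E (insert j S) l := by
  rintro ⟨y, hy, hly⟩
  obtain ⟨p, htrail, hhead, hlast, hcol, hncol⟩ := hconn
  apply hsep
  refine ⟨p, htrail, hhead, hlast, ?_, ?_⟩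
  · intro a b c hinfix hct
    obtain ⟨d, hd, hbd⟩ := hcol a b c hinfix hct
    rcases hd with hd | hd
    · rcases hd with hd | hd
      · subst hd
        have hyWS : y ∈ W ∪ S := by
          rcases hy with hy | hy
          · exact Or.inl (hy ▸ hj)
          · exact Or.inr hy
        exact ⟨y, hyWS, hbd.trans hly⟩
      · exact ⟨d, Or.inl hd, hbd⟩
    · exact ⟨d, Or.inr hd, hbd⟩
  · intro a b c hinfix hct hbC
    exact hncol a b c hinfix hct (by rcases hbC with h | h; exact Or.inl (Or.inr h); exact Or.inr h)
end

section
/- If G'' is a mixed graph over O containing every edge of the MAAG G' of a directed graph G, and every v-structure of G' is either a v-structure of G'' or forms a triangle in G'', then PD-SEP(O_i) computed in G' is a subset of PD-SEP(O_i) computed in G'' for every O_i ∈ O. -/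
open List

variable {V : Type*}

theorem TriangleIn.mono {H₁ H₂ : Mixed V} (hadj : ∀ a b, H₁.adj a b → H₂.adj a b) {a b c : V}
    (h : TriangleIn H₁ a b c) : TriangleIn H₂ a b c :=
  ⟨hadj _ _ h.1, hadj _ _ h.2.1, hadj _ _ h.2.2⟩

theorem InPDSEP.mono {H₁ H₂ : Mixed V} (hadj : ∀ a b, H₁.adj a b → H₂.adj a b)
    (hvs : ∀ a b c, VStruct H₁ a b c → VStruct H₂ a b c ∨ TriangleIn H₂ a b c) {x k : V}
    (h : InPDSEP H₁ x k) : InPDSEP H₂ x k := by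
  obtain ⟨pa, hhead, hlast, hnodup, hchain, htriples⟩ := h
  refine ⟨pa, hhead, hlast, hnodup, hchain.imp hadj, fun a b c hsub => ?_⟩
  rcases htriples a b c hsub with hv | ht
  · exact hvs a b c hv
  · exact Or.inr (ht.mono hadj)

/-- if a mixed graph `H` contains every edge of the MAAG of `G`, and every
v-structure of the MAAG is either a v-structure of `H` or forms a triangle in `H`, then
PD-SEP computed in the MAAG is contained in PD-SEP computed in `H`. -/
theorem stmt18 (E : V → V → Prop) (L S : Set V) (H : Mixed V)
    (hadj : ∀ a b, (MAAG E L S).adj a b → H.adj a b)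
    (hvs : ∀ a b c, VStruct (MAAG E L S) a b c → VStruct H a b c ∨ TriangleIn H a b c) :
    ∀ x k, InPDSEP (MAAG E L S) x k → InPDSEP H x k :=
  fun _ _ => InPDSEP.mono hadj hvs
end
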